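/- arXiv:2310.06060 — 8 statements merged into one kernel-verified Lean document; each statement's English description precedes it below -/
import Mathlib

section
/- For every integer n ≥ 1, the term a_n of the sequence defined by a_0 = 5, a_1 = 13, a_{n+1} = 6a_n − a_{n−1} is the hypotenuse of a primitive Pythagorean triple whose legs differ by 7; that is, there exists a positive integer m with m² + (m+7)² = a_n² and gcd(m, m+7, a_n) = 1. -/
/-- For every `n ≥ 1`, the term `a n` of the sequence with `a 0 = 5`, `a 1 = 13`,
`a (n+1) = 6 * a n - a (n-1)` is the hypotenuse of a primitive Pythagorean triple
whose legs differ by 7. -/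
theorem stmt_0 (a : ℕ → ℤ) (h0 : a 0 = 5) (h1 : a 1 = 13)
    (hrec : ∀ n : ℕ, a (n + 2) = 6 * a (n + 1) - a n) :
    ∀ n : ℕ, 1 ≤ n → ∃ m : ℤ, 0 < m ∧ m ^ 2 + (m + 7) ^ 2 = (a n) ^ 2 ∧
      Int.gcd (Int.gcd m (m + 7)) (a n) = 1 := by
  -- a n is never divisible by 7
  have key : ∀ n : ℕ, ((a n : ZMod 7) = 5 ∧ (a (n+1) : ZMod 7) = 6) ∨
      ((a n : ZMod 7) = 6 ∧ (a (n+1) : ZMod 7) = 3) ∨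
      ((a n : ZMod 7) = 3 ∧ (a (n+1) : ZMod 7) = 5) := by
    intro n
    induction n with
    | zero => left; rw [h0, h1]; constructor <;> (push_cast; decide)
    | succ k ih =>
      have hr : ((a (k+2) : ZMod 7)) = 6 * (a (k+1) : ZMod 7) - (a k : ZMod 7) := by
        rw [hrec k]; push_cast; ring
      rcases ih with ⟨hA, hB⟩ | ⟨hA, hB⟩ | ⟨hA, hB⟩
      · right; left; refine ⟨hB, ?_⟩; rw [hr, hA, hB]; decide
      · right; right; refine ⟨hB, ?_⟩; rw [hr, hA, hB]; decide
      · left; refine ⟨hB, ?_⟩; rw [hr, hA, hB]; decide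
  have h7 : ∀ n : ℕ, ¬ (7:ℤ) ∣ a n := by
    intro n hd
    have hz : (a n : ZMod 7) = 0 := by
      exact (ZMod.intCast_zmod_eq_zero_iff_dvd _ 7).2 hd
    rcases key n with ⟨hA, _⟩ | ⟨hA, _⟩ | ⟨hA, _⟩ <;> rw [hA] at hz <;> exact absurd hz (by decide)
  have main : ∀ n : ℕ, ∃ m : ℤ, 0 < m ∧ 0 < a (n+1) ∧
      a (n+2) - 3 * a (n+1) = 4*m + 14 ∧ m^2 + (m+7)^2 = (a (n+1))^2 := by
    intro n
    induction n with
    | zero =>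
      refine ⟨5, by norm_num, by rw [h1]; norm_num, ?_, by rw [h1]; norm_num⟩
      rw [hrec 0, h0, h1]; norm_num
    | succ k ih =>
      obtain ⟨m, hm, ha, hlin, hsq⟩ := ih
      refine ⟨3*m + 2*(a (k+1)) + 7, by linarith, by linarith, ?_, ?_⟩
      · have hr := hrec (k+1)
        have hr0 := hrec k
        linarith
      · have h2 : a (k+1+1) = 3 * a (k+1) + 4*m + 14 := by linarith
        rw [h2]
        linear_combination hsq
  intro n hn
  obtain ⟨k, rfl⟩ : ∃ k, n = k + 1 := ⟨n - 1, by omega⟩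
  obtain ⟨m, hm, ha, hlin, hsq⟩ := main k
  refine ⟨m, hm, hsq, ?_⟩
  set g : ℕ := Int.gcd m (m + 7) with hg
  have hg7 : (g : ℤ) ∣ 7 := by
    have h1' : (g : ℤ) ∣ m := Int.gcd_dvd_left m (m + 7)
    have h2' : (g : ℤ) ∣ m + 7 := Int.gcd_dvd_right m (m + 7)
    have := dvd_sub h2' h1'
    simpa using this
  set d : ℕ := Int.gcd (g : ℤ) (a (k+1)) with hd
  have hd7 : (d : ℤ) ∣ 7 := dvd_trans (Int.gcd_dvd_left (g : ℤ) (a (k+1))) hg7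
  have hda : (d : ℤ) ∣ a (k+1) := Int.gcd_dvd_right (g : ℤ) (a (k+1))
  have hd7' : d ∣ 7 := by exact_mod_cast hd7
  rcases Nat.Prime.eq_one_or_self_of_dvd (by norm_num : Nat.Prime 7) d hd7' with h | h
  · exact h
  · exfalso
    apply h7 (k+1)
    rw [h] at hda
    exact_mod_cast hda
end

section
/- For every integer n ≥ 1, the term a_n of the sequence defined by a_0 = 5, a_1 = 17, a_{n+1} = 6a_n − a_{n−1} is the hypotenuse of a primitive Pythagorean triple whose legs differ by 7; that is, there exists a positive integer m with m² + (m+7)² = a_n² and gcd(m, m+7, a_n) = 1. -/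
private def pp : ℕ → ℤ × ℤ
  | 0 => (23, 17)
  | n + 1 => (3 * (pp n).1 + 4 * (pp n).2, 2 * (pp n).1 + 3 * (pp n).2)

private lemma pp_inv : ∀ n : ℕ, (pp n).1 ^ 2 + 49 = 2 * (pp n).2 ^ 2 ∧
    23 ≤ (pp n).1 ∧ 17 ≤ (pp n).2 ∧ Odd (pp n).1 ∧ IsCoprime (pp n).1 (pp n).2 := by
  intro n
  induction n with
  | zero =>
    refine ⟨by norm_num [pp], by norm_num [pp], by norm_num [pp], ⟨11, by norm_num [pp]⟩, ?_⟩
    rw [Int.isCoprime_iff_gcd_eq_one]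
    decide
  | succ k ih =>
    obtain ⟨heq, hu, hv, ⟨t, ht⟩, hco⟩ := ih
    refine ⟨?_, ?_, ?_, ⟨3 * t + 2 * (pp k).2 + 1, by simp [pp]; linarith⟩, ?_⟩
    · simp only [pp]; ring_nf; ring_nf at heq; linarith
    · simp only [pp]; linarith
    · simp only [pp]; linarith
    · obtain ⟨a, c, hac⟩ := hco
      exact ⟨3 * a - 2 * c, -4 * a + 3 * c, by simp only [pp]; linarith [hac]⟩

/-- For every `n ≥ 1`, the term `b n` of the sequence with `b 0 = 5`, `b 1 = 17`,
`b (n+1) = 6 * b n - b (n-1)` is the hypotenuse of a primitive Pythagorean triple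
whose legs differ by 7. -/
theorem stmt_1 (b : ℕ → ℤ) (h0 : b 0 = 5) (h1 : b 1 = 17)
    (hrec : ∀ n : ℕ, b (n + 2) = 6 * b (n + 1) - b n) :
    ∀ n : ℕ, 1 ≤ n → ∃ m : ℤ, 0 < m ∧ m ^ 2 + (m + 7) ^ 2 = (b n) ^ 2 ∧
      Int.gcd (Int.gcd m (m + 7)) (b n) = 1 := by
  have hb : ∀ n : ℕ, b (n + 1) = (pp n).2 ∧ b (n + 2) = 3 * b (n + 1) + 2 * (pp n).1 := by
    intro n
    induction n with
    | zero => constructor <;> simp [pp, h1, hrec 0, h0]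
    | succ k ih =>
      obtain ⟨ih1, ih2⟩ := ih
      have h1' : b (k + 2) = (pp (k + 1)).2 := by simp only [pp]; linarith
      refine ⟨h1', ?_⟩
      have := hrec (k + 1)
      simp only [pp]; linarith
  intro n hn
  obtain ⟨k, rfl⟩ : ∃ k, n = k + 1 := ⟨n - 1, by omega⟩
  obtain ⟨heq, hu, hv, ⟨t, ht⟩, hco⟩ := pp_inv k
  have hbk := (hb k).1
  refine ⟨t - 3, by linarith, ?_, ?_⟩
  · have h2m : 2 * (t - 3) + 7 = (pp k).1 := by linarith
    rw [hbk]; nlinarith [heq, h2m]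
  · have hgcd1 : Int.gcd (pp k).1 (pp k).2 = 1 := Int.isCoprime_iff_gcd_eq_one.mp hco
    set m : ℤ := t - 3 with hm
    set g : ℤ := (Int.gcd (Int.gcd m (m + 7)) (b (k + 1)) : ℤ) with hg
    have g1 : g ∣ (Int.gcd m (m + 7) : ℤ) := Int.gcd_dvd_left _ _
    have g2 : g ∣ b (k + 1) := Int.gcd_dvd_right _ _
    have gm : g ∣ m := g1.trans (Int.gcd_dvd_left _ _)
    have gm7 : g ∣ m + 7 := g1.trans (Int.gcd_dvd_right _ _)
    have gu : g ∣ (pp k).1 := by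
      have : (pp k).1 = m + (m + 7) := by linarith
      rw [this]; exact dvd_add gm gm7
    have gv : g ∣ (pp k).2 := hbk ▸ g2
    have : g ∣ (1 : ℤ) := by
      have := Int.dvd_coe_gcd gu gv
      rwa [hgcd1, Nat.cast_one] at this
    rw [hg] at this
    exact Nat.dvd_one.mp (by exact_mod_cast this)
end

section
/- A positive integer z is the hypotenuse of a primitive Pythagorean triple whose legs differ by 7 if and only if z = a_n for some n ≥ 1, where a is the sequence with a_0 = 5, a_1 = 13 and a_{n+1} = 6a_n − a_{n−1}, or z = b_n for some n ≥ 1, where b is the sequence with b_0 = 5, b_1 = 17 and b_{n+1} = 6b_n − b_{n−1}. -/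
private def pstep (p : ℤ × ℤ) : ℤ × ℤ := (3*p.1 + 2*p.2, 4*p.1 + 3*p.2)

private def pseq (i : ℤ × ℤ) : ℕ → ℤ × ℤ
  | 0 => i
  | n+1 => pstep (pseq i n)

private lemma pseq_succ (i : ℤ × ℤ) (n : ℕ) :
    (pseq i (n+1)).1 = 3*(pseq i n).1 + 2*(pseq i n).2 ∧
    (pseq i (n+1)).2 = 4*(pseq i n).1 + 3*(pseq i n).2 := ⟨rfl, rfl⟩

private lemma pseq_rec (i : ℤ × ℤ) (n : ℕ) :
    (pseq i (n+2)).1 = 6*(pseq i (n+1)).1 - (pseq i n).1 := by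
  obtain ⟨h1, h2⟩ := pseq_succ i n
  obtain ⟨h3, _⟩ := pseq_succ i (n+1)
  rw [h3, h1, h2]; ring

private lemma pell (i : ℤ × ℤ) : ∀ n,
    2*(pseq i n).1^2 - (pseq i n).2^2 = 2*i.1^2 - i.2^2 := by
  intro n; induction n with
  | zero => rfl
  | succ n ih =>
    obtain ⟨h1, h2⟩ := pseq_succ i n
    rw [h1, h2]; linear_combination ih

private lemma growth (i : ℤ × ℤ) (h1 : 5 ≤ i.1) (h2 : -1 ≤ i.2) (h3 : 4 ≤ i.1 + i.2) :
    ∀ n, 5 ≤ (pseq i n).1 ∧ -1 ≤ (pseq i n).2 ∧ 4 ≤ (pseq i n).1 + (pseq i n).2 := by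
  intro n; induction n with
  | zero => exact ⟨h1, h2, h3⟩
  | succ n ih =>
    obtain ⟨e1, e2⟩ := pseq_succ i n
    obtain ⟨g1, g2, g3⟩ := ih
    rw [e1, e2]
    refine ⟨by linarith, by linarith, by linarith⟩

private lemma gap (i : ℤ × ℤ) (h1 : 5 ≤ i.1) (h2 : -1 ≤ i.2) (h3 : 4 ≤ i.1 + i.2) (n : ℕ) :
    4 ≤ (pseq i (n+1)).2 - (pseq i (n+1)).1 := by
  obtain ⟨e1, e2⟩ := pseq_succ i n
  obtain ⟨g1, g2, g3⟩ := growth i h1 h2 h3 n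
  rw [e1, e2]; linarith

private lemma mod7A : ∀ n, ((pseq (5,-1) n).1 % 7 = 5 ∧ (pseq (5,-1) n).2 % 7 = 6) ∨
    ((pseq (5,-1) n).1 % 7 = 6 ∧ (pseq (5,-1) n).2 % 7 = 3) ∨
    ((pseq (5,-1) n).1 % 7 = 3 ∧ (pseq (5,-1) n).2 % 7 = 5) := by
  intro n; induction n with
  | zero => left; constructor <;> rfl
  | succ n ih =>
    obtain ⟨e1, e2⟩ := pseq_succ (5,-1) n
    rw [e1, e2]; omega

private lemma mod7B : ∀ n, ((pseq (5,1) n).1 % 7 = 5 ∧ (pseq (5,1) n).2 % 7 = 1) ∨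
    ((pseq (5,1) n).1 % 7 = 3 ∧ (pseq (5,1) n).2 % 7 = 2) ∨
    ((pseq (5,1) n).1 % 7 = 6 ∧ (pseq (5,1) n).2 % 7 = 4) := by
  intro n; induction n with
  | zero => left; constructor <;> rfl
  | succ n ih =>
    obtain ⟨e1, e2⟩ := pseq_succ (5,1) n
    rw [e1, e2]; omega

private lemma not7A (n : ℕ) : ¬ (7:ℤ) ∣ (pseq (5,-1) n).1 := by
  have := mod7A n; omega

private lemma not7B (n : ℕ) : ¬ (7:ℤ) ∣ (pseq (5,1) n).1 := by
  have := mod7B n; omega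

private lemma sq_cases {u w : ℤ} (h : u^2 = w^2) : u = w ∨ u = -w := by
  have h0 : (u - w) * (u + w) = 0 := by linear_combination h
  rcases mul_eq_zero.mp h0 with h' | h'
  · left; linarith
  · right; linarith

private lemma descent : ∀ k : ℕ, ∀ z u : ℤ, z.natAbs ≤ k → 5 ≤ z → 0 ≤ u →
    u^2 = 2*z^2 - 49 → ¬ (7:ℤ) ∣ z →
    ∃ n, z = (pseq (5,-1) n).1 ∨ z = (pseq (5,1) n).1 := by
  intro k
  induction k with
  | zero => intro z u hk hz _ _ _; omega
  | succ k ih =>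
    intro z u hk hz5 hu0 hu h7
    by_cases hz7 : z ≤ 7
    · interval_cases z
      · exact ⟨0, Or.inl rfl⟩
      · exfalso
        have h4 : u ≤ 4 := by nlinarith
        interval_cases u <;> omega
      · exact absurd ⟨1, by ring⟩ h7
    · push_neg at hz7
      have huz : z < u := by nlinarith
      have h3z : 2*u < 3*z := by nlinarith
      -- descent step
      have hq : (3*u - 4*z)^2 = 2*(3*z - 2*u)^2 - 49 := by linear_combination hu
      have hzq5 : 5 ≤ 3*z - 2*u := by nlinarith [sq_nonneg (3*u - 4*z)]
      have hzid : z = 2*(3*u - 4*z) + 3*(3*z - 2*u) := by ring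
      have h7q : ¬ (7:ℤ) ∣ (3*z - 2*u) := by
        intro hd
        have hdu2 : (7:ℤ) ∣ (3*u - 4*z)^2 := by
          rw [hq]; exact Dvd.dvd.sub (Dvd.dvd.mul_left (dvd_pow hd two_ne_zero) _) ⟨7, rfl⟩
        have hdu : (7:ℤ) ∣ (3*u - 4*z) :=
          (Int.Prime.dvd_pow' (by norm_num) hdu2)
        exact h7 (hzid ▸ (by exact dvd_add (hdu.mul_left 2) (hd.mul_left 3)))
      have habs : |3*u - 4*z|^2 = 2*(3*z - 2*u)^2 - 49 := by rw [sq_abs]; exact hq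
      obtain ⟨n, hn⟩ := ih (3*z - 2*u) |3*u - 4*z| (by omega) hzq5 (abs_nonneg _) habs h7q
      rcases hn with hA | hB
      · -- zq = A n
        have hpell := pell (5,-1) n
        norm_num at hpell
        have hU2 : (3*u - 4*z)^2 = (pseq (5,-1) n).2^2 := by
          rw [hq, hA]; linarith
        rcases sq_cases hU2 with hU | hU
        · refine ⟨n+1, Or.inl ?_⟩
          obtain ⟨e1, _⟩ := pseq_succ (5,-1) n
          rw [e1, ← hA, ← hU]; linarith [hzid]
        · -- 3u-4z = -U n
          match n with
          | 0 =>
            refine ⟨1, Or.inr ?_⟩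
            have hA0 : (pseq (5,-1) 0).1 = 5 := rfl
            have hU0 : (pseq (5,-1) 0).2 = -1 := rfl
            have hB1 : (pseq (5,1) 1).1 = 17 := rfl
            rw [hB1]
            rw [hA0] at hA; rw [hU0] at hU
            linarith [hzid]
          | (m+1) =>
            exfalso
            have hg := gap (5,-1) (by norm_num) (by norm_num) (by norm_num) m
            have hzlt : 3*z - 2*u < z := by linarith
            linarith [hzid]
      · -- zq = B n, symmetric
        have hpell := pell (5,1) n
        norm_num at hpell
        have hU2 : (3*u - 4*z)^2 = (pseq (5,1) n).2^2 := by
          rw [hq, hB]; linarith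
        rcases sq_cases hU2 with hU | hU
        · refine ⟨n+1, Or.inr ?_⟩
          obtain ⟨e1, _⟩ := pseq_succ (5,1) n
          rw [e1, ← hB, ← hU]; linarith [hzid]
        · match n with
          | 0 =>
            refine ⟨1, Or.inl ?_⟩
            have hB0 : (pseq (5,1) 0).1 = 5 := rfl
            have hV0 : (pseq (5,1) 0).2 = 1 := rfl
            have hA1 : (pseq (5,-1) 1).1 = 13 := rfl
            rw [hA1]
            rw [hB0] at hB; rw [hV0] at hU
            linarith [hzid]
          | (m+1) =>
            exfalso
            have hg := gap (5,1) (by norm_num) (by norm_num) (by norm_num) m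
            have hzlt : 3*z - 2*u < z := by linarith
            linarith [hzid]

private lemma reverse (i : ℤ × ℤ) (h1 : 5 ≤ i.1) (h2 : -1 ≤ i.2) (h3 : 4 ≤ i.1 + i.2)
    (hpi : 2*i.1^2 - i.2^2 = 49) (n : ℕ) (h7 : ¬ (7:ℤ) ∣ (pseq i (n+1)).1) :
    ∃ m : ℤ, 0 < m ∧ m ^ 2 + (m + 7) ^ 2 = (pseq i (n+1)).1 ^ 2 ∧
        Int.gcd (Int.gcd m (m + 7)) ((pseq i (n+1)).1) = 1 := by
  have hp : 2*(pseq i (n+1)).1^2 - (pseq i (n+1)).2^2 = 49 := by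
    rw [pell i (n+1)]; exact hpi
  have hg := gap i h1 h2 h3 n
  have hA5 := (growth i h1 h2 h3 (n+1)).1
  have hU9 : 9 ≤ (pseq i (n+1)).2 := by linarith
  have hodd : (pseq i (n+1)).2 % 2 = 1 := by
    rcases Int.even_or_odd (pseq i (n+1)).2 with ⟨k, hk⟩ | ⟨k, hk⟩
    · exfalso
      have h49 : (49:ℤ) = 2*(pseq i (n+1)).1^2 - (k+k)^2 := by rw [← hk]; linarith
      have : (2:ℤ) ∣ 49 := ⟨(pseq i (n+1)).1^2 - 2*k^2, by linear_combination h49⟩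
      norm_num at this
    · omega
  obtain ⟨m, hm⟩ : ∃ m, (pseq i (n+1)).2 = 2*m + 7 := ⟨((pseq i (n+1)).2 - 7)/2, by omega⟩
  refine ⟨m, by omega, ?_, ?_⟩
  · rw [hm] at hp
    have h2eq : 2*(m^2 + (m+7)^2) = 2*(pseq i (n+1)).1^2 := by linear_combination -hp
    linarith
  · have hd7 : (Int.gcd m (m+7) : ℤ) ∣ 7 := by
      have hl : (Int.gcd m (m+7) : ℤ) ∣ m := Int.gcd_dvd_left _ _
      have hr : (Int.gcd m (m+7) : ℤ) ∣ (m+7) := Int.gcd_dvd_right _ _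
      have hd := dvd_sub hr hl
      have h7eq : (m+7) - m = (7:ℤ) := by ring
      rwa [h7eq] at hd
    have hg7 : (Int.gcd (↑(Int.gcd m (m+7))) ((pseq i (n+1)).1) : ℤ) ∣ 7 :=
      dvd_trans (Int.gcd_dvd_left _ _) hd7
    have hgz : (Int.gcd (↑(Int.gcd m (m+7))) ((pseq i (n+1)).1) : ℤ) ∣ (pseq i (n+1)).1 :=
      Int.gcd_dvd_right _ _
    have hg7' : Int.gcd (↑(Int.gcd m (m+7))) ((pseq i (n+1)).1) ∣ 7 := by
      exact_mod_cast hg7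
    rcases (by norm_num : Nat.Prime 7).eq_one_or_self_of_dvd _ hg7' with h | h
    · exact h
    · exfalso; rw [h] at hgz; exact h7 (by exact_mod_cast hgz)

/-- A positive integer `z` is the hypotenuse of a primitive Pythagorean triple whose legs
differ by 7 iff `z = a n` for some `n ≥ 1` (`a 0 = 5`, `a 1 = 13`, `a (n+1) = 6 a n - a (n-1)`)
or `z = b n` for some `n ≥ 1` (`b 0 = 5`, `b 1 = 17`, same recurrence). -/
theorem stmt_2 (a b : ℕ → ℤ)
    (ha0 : a 0 = 5) (ha1 : a 1 = 13) (hareca : ∀ n : ℕ, a (n + 2) = 6 * a (n + 1) - a n)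
    (hb0 : b 0 = 5) (hb1 : b 1 = 17) (hrecb : ∀ n : ℕ, b (n + 2) = 6 * b (n + 1) - b n)
    (z : ℤ) (hz : 0 < z) :
    (∃ m : ℤ, 0 < m ∧ m ^ 2 + (m + 7) ^ 2 = z ^ 2 ∧
        Int.gcd (Int.gcd m (m + 7)) z = 1) ↔
      (∃ n : ℕ, 1 ≤ n ∧ z = a n) ∨ (∃ n : ℕ, 1 ≤ n ∧ z = b n) := by
  have hA : ∀ n, a n = (pseq (5,-1) n).1 ∧ a (n+1) = (pseq (5,-1) (n+1)).1 := by
    intro n; induction n with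
    | zero => exact ⟨by rw [ha0]; rfl, by rw [ha1]; rfl⟩
    | succ n ih => exact ⟨ih.2, by rw [hareca n, pseq_rec, ih.1, ih.2]⟩
  have hB : ∀ n, b n = (pseq (5,1) n).1 ∧ b (n+1) = (pseq (5,1) (n+1)).1 := by
    intro n; induction n with
    | zero => exact ⟨by rw [hb0]; rfl, by rw [hb1]; rfl⟩
    | succ n ih => exact ⟨ih.2, by rw [hrecb n, pseq_rec, ih.1, ih.2]⟩
  constructor
  · rintro ⟨m, hm0, hmz, hgcd⟩
    have hu : (2*m+7)^2 = 2*z^2 - 49 := by linear_combination 2*hmz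
    have hz9 : 9 ≤ z := by nlinarith
    have h7 : ¬ (7:ℤ) ∣ z := by
      intro hd
      obtain ⟨c, hc⟩ := hd
      have h7u2 : (7:ℤ) ∣ (2*m+7)^2 := ⟨14*c^2 - 7, by rw [hu, hc]; ring⟩
      have h7u : (7:ℤ) ∣ (2*m+7) := Int.Prime.dvd_pow' (by norm_num) h7u2
      have h7m : (7:ℤ) ∣ m := by omega
      have hd1 : (7:ℤ) ∣ (Int.gcd m (m+7) : ℤ) := Int.dvd_coe_gcd h7m (by omega)
      have hd2 : (7:ℤ) ∣ (Int.gcd (Int.gcd m (m+7)) z : ℤ) := Int.dvd_coe_gcd hd1 ⟨c, hc⟩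
      rw [hgcd] at hd2; norm_num at hd2
    obtain ⟨n, hn⟩ := descent z.natAbs z (2*m+7) le_rfl (by omega) (by linarith) hu h7
    rcases hn with h | h
    · rcases n with _ | k
      · exfalso; have : (pseq ((5:ℤ),(-1:ℤ)) 0).1 = 5 := rfl; omega
      · exact Or.inl ⟨k+1, by omega, by rw [(hA k).2]; exact h⟩
    · rcases n with _ | k
      · exfalso; have : (pseq ((5:ℤ),(1:ℤ)) 0).1 = 5 := rfl; omega
      · exact Or.inr ⟨k+1, by omega, by rw [(hB k).2]; exact h⟩
  · rintro (⟨n, hn1, hzn⟩ | ⟨n, hn1, hzn⟩)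
    · rcases n with _ | k
      · omega
      · have hz' : z = (pseq (5,-1) (k+1)).1 := by rw [hzn, (hA k).2]
        rw [hz']
        exact reverse (5,-1) (by norm_num) (by norm_num) (by norm_num) (by norm_num)
          k (not7A (k+1))
    · rcases n with _ | k
      · omega
      · have hz' : z = (pseq (5,1) (k+1)).1 := by rw [hzn, (hB k).2]
        rw [hz']
        exact reverse (5,1) (by norm_num) (by norm_num) (by norm_num) (by norm_num)
          k (not7B (k+1))
end

section
/- For the sequence a with a_0 = 5, a_1 = 13, a_{n+1} = 6a_n − a_{n−1}, the identity 2·a_n² − 49 = ( ((5√2 − 1)/2)·(3 + 2√2)^n − ((5√2 + 1)/2)·(3 − 2√2)^n )² holds (as an identity of real numbers) for every n ≥ 0. -/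
open Real

/-- For the sequence `a 0 = 5`, `a 1 = 13`, `a (n+1) = 6 a n - a (n-1)`:
`2 (a n)^2 - 49` has a closed squared form. -/
theorem stmt_4 (a : ℕ → ℤ) (h0 : a 0 = 5) (h1 : a 1 = 13)
    (hrec : ∀ n : ℕ, a (n + 2) = 6 * a (n + 1) - a n) :
    ∀ n : ℕ, 2 * (a n : ℝ) ^ 2 - 49 =
      (((5 * Real.sqrt 2 - 1) / 2) * (3 + 2 * Real.sqrt 2) ^ n -
       ((5 * Real.sqrt 2 + 1) / 2) * (3 - 2 * Real.sqrt 2) ^ n) ^ 2 := by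
  set s := Real.sqrt 2 with hs
  have hs2 : s ^ 2 = 2 := Real.sq_sqrt (by norm_num)
  have closed : ∀ n : ℕ, (a n : ℝ) =
      ((10 - s) / 4) * (3 + 2 * s) ^ n + ((10 + s) / 4) * (3 - 2 * s) ^ n := by
    have key : ∀ n : ℕ,
        ((a n : ℝ) = ((10 - s) / 4) * (3 + 2 * s) ^ n + ((10 + s) / 4) * (3 - 2 * s) ^ n) ∧
        ((a (n+1) : ℝ) = ((10 - s) / 4) * (3 + 2 * s) ^ (n+1) + ((10 + s) / 4) * (3 - 2 * s) ^ (n+1)) := by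
      intro n
      induction n with
      | zero =>
        constructor
        · rw [h0]; push_cast; ring
        · rw [h1]; push_cast; linear_combination hs2
      | succ k ih =>
        refine ⟨ih.2, ?_⟩
        have hr := hrec k
        have : (a (k + 2) : ℝ) = 6 * (a (k+1) : ℝ) - (a k : ℝ) := by
          rw [hr]; push_cast; ring
        rw [this, ih.1, ih.2]
        linear_combination (-(10 - s) * (3 + 2*s) ^ k - (10 + s) * (3 - 2*s) ^ k) * hs2
    exact fun n => (key n).1
  intro n
  have hxy : (3 + 2 * s) ^ n * (3 - 2 * s) ^ n = 1 := by
    rw [← mul_pow]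
    have : (3 + 2 * s) * (3 - 2 * s) = 1 := by linear_combination -4 * hs2
    rw [this, one_pow]
  rw [closed n]
  set x := (3 + 2 * s) ^ n
  set y := (3 - 2 * s) ^ n
  linear_combination ((-49/8) * x^2 + (49/4) * (x*y) + (-49/8) * y^2) * hs2 + 49 * hxy
end

section
/- For the sequence a with a_0 = 5, a_1 = 13, a_{n+1} = 6a_n − a_{n−1}, for every n ≥ 1 the number 2·a_n² − 49 is the square of a positive odd integer strictly greater than 7. -/
private def bseq : ℕ → ℤ
  | 0 => 17
  | 1 => 103
  | n + 2 => 6 * bseq (n + 1) - bseq n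

private lemma bseq_pos_mono : ∀ n : ℕ, 7 < bseq n ∧ bseq n < bseq (n + 1) := by
  intro n
  induction n using Nat.twoStepInduction with
  | zero => constructor <;> simp [bseq]
  | one => constructor <;> norm_num [bseq]
  | more n ih ih2 =>
    obtain ⟨h7, hlt⟩ := ih2
    have h7' := ih.1
    constructor
    · show 7 < 6 * bseq (n + 1) - bseq n
      nlinarith
    · show bseq (n + 1 + 1) < 6 * bseq (n + 1 + 1) - bseq (n + 1)
      nlinarith

private lemma bseq_odd : ∀ n : ℕ, Odd (bseq n) := by
  intro n
  induction n using Nat.twoStepInduction with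
  | zero => exact ⟨8, by norm_num [bseq]⟩
  | one => exact ⟨51, by norm_num [bseq]⟩
  | more n ih ih2 =>
    obtain ⟨k, hk⟩ := ih
    exact ⟨3 * bseq (n + 1) - k - 1, by show 6 * bseq (n+1) - bseq n = _; rw [hk]; ring⟩

/-- For the sequence `a 0 = 5`, `a 1 = 13`, `a (n+1) = 6 a n - a (n-1)`, for every `n ≥ 1`
the number `2 (a n)^2 - 49` is the square of a positive odd integer strictly greater than 7. -/
theorem stmt_5 (a : ℕ → ℤ) (h0 : a 0 = 5) (h1 : a 1 = 13)
    (hrec : ∀ n : ℕ, a (n + 2) = 6 * a (n + 1) - a n) :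
    ∀ n : ℕ, 1 ≤ n → ∃ d : ℤ, 0 < d ∧ Odd d ∧ 7 < d ∧ 2 * (a n) ^ 2 - 49 = d ^ 2 := by
  have hinv : ∀ n : ℕ, a (n + 1) ^ 2 - 6 * a (n + 1) * a n + a n ^ 2 = -196 := by
    intro n
    induction n with
    | zero => rw [h0, h1]; norm_num
    | succ m ih => rw [hrec m]; nlinarith [ih]
  have hb : ∀ n : ℕ, 2 * bseq n = 3 * a (n + 1) - a n := by
    intro n
    induction n using Nat.twoStepInduction with
    | zero => rw [h0, h1]; norm_num [bseq]
    | one => rw [hrec 0, h0, h1]; norm_num [bseq]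
    | more m ih ih2 =>
      have hr1 := hrec m
      have hr2 := hrec (m + 1)
      show 2 * (6 * bseq (m + 1) - bseq m) = _
      have : m + 1 + 1 + 1 = m + 1 + 2 := rfl
      rw [this, hr2]
      nlinarith [ih, ih2, hr1]
  intro n hn
  obtain ⟨m, rfl⟩ : ∃ m, n = m + 1 := ⟨n - 1, by omega⟩
  refine ⟨bseq m, by linarith [(bseq_pos_mono m).1], bseq_odd m, (bseq_pos_mono m).1, ?_⟩
  have h1 := hinv m
  have h2 := hb m
  have h4 : (4:ℤ) * (2 * a (m+1)^2 - 49) = 4 * bseq m ^ 2 := by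
    linear_combination (-1)*h1 - (2*bseq m + 3*a (m+1) - a m)*h2
  linarith
end

section
/- For the sequence b with b_0 = 5, b_1 = 17, b_{n+1} = 6b_n − b_{n−1}, the identity 2·b_n² − 49 = ( ((5√2 + 1)/2)·(3 + 2√2)^n − ((5√2 − 1)/2)·(3 − 2√2)^n )² holds (as an identity of real numbers) for every n ≥ 0, and for every n ≥ 1 the number 2·b_n² − 49 is the square of a positive odd integer strictly greater than 7. -/
open Real

private def dd : ℕ → ℤ × ℤ
  | 0 => (1, 23)
  | n+1 => ((dd n).2, 6 * (dd n).2 - (dd n).1)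

private def d (n : ℕ) : ℤ := (dd n).1

private lemma d0 : d 0 = 1 := rfl
private lemma d1 : d 1 = 23 := rfl
private lemma drec (n : ℕ) : d (n+2) = 6 * d (n+1) - d n := rfl

/-- For the sequence `b 0 = 5`, `b 1 = 17`, `b (n+1) = 6 b n - b (n-1)`:
the closed squared form of `2 (b n)^2 - 49` holds for all `n ≥ 0`, and for `n ≥ 1`
the number `2 (b n)^2 - 49` is the square of a positive odd integer greater than 7. -/
theorem stmt_6 (b : ℕ → ℤ) (h0 : b 0 = 5) (h1 : b 1 = 17)
    (hrec : ∀ n : ℕ, b (n + 2) = 6 * b (n + 1) - b n) :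
    (∀ n : ℕ, 2 * (b n : ℝ) ^ 2 - 49 =
      (((5 * Real.sqrt 2 + 1) / 2) * (3 + 2 * Real.sqrt 2) ^ n -
       ((5 * Real.sqrt 2 - 1) / 2) * (3 - 2 * Real.sqrt 2) ^ n) ^ 2) ∧
    (∀ n : ℕ, 1 ≤ n → ∃ d : ℤ, 0 < d ∧ Odd d ∧ 7 < d ∧ 2 * (b n) ^ 2 - 49 = d ^ 2) := by
  have key : ∀ n : ℕ, 2 * (b n)^2 - (d n)^2 = 49 ∧
      2 * (b (n+1))^2 - (d (n+1))^2 = 49 ∧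
      2 * b (n+1) * b n - d (n+1) * d n = 147 := by
    intro n
    induction n with
    | zero => norm_num [h0, h1, d0, d1]
    | succ k ih =>
      obtain ⟨i1, i2, i3⟩ := ih
      refine ⟨i2, ?_, ?_⟩
      · rw [hrec, drec]; nlinarith [i1, i2, i3]
      · rw [hrec, drec]; nlinarith [i1, i2, i3]
  have dpos : ∀ n : ℕ, 0 < d n ∧ d n < d (n+1) ∧ Odd (d n) ∧ Odd (d (n+1)) := by
    intro n
    induction n with
    | zero =>
      refine ⟨by norm_num [d0], by norm_num [d0, d1], ⟨0, by norm_num [d0]⟩,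
        ⟨11, by norm_num [d1]⟩⟩
    | succ k ih =>
      obtain ⟨p, lt, ⟨a, ha⟩, ob⟩ := ih
      refine ⟨by omega, ?_, ob, ?_⟩
      · rw [drec]; omega
      · rw [drec]; exact ⟨3 * d (k+1) - a - 1, by omega⟩
  have dge : ∀ n : ℕ, 23 ≤ d (n+1) := by
    intro n
    induction n with
    | zero => norm_num [d1]
    | succ k ih => have := (dpos (k+1)).2.1; omega
  constructor
  · have hs : Real.sqrt 2 ^ 2 = 2 := Real.sq_sqrt (by norm_num)
    set s := Real.sqrt 2 with hsdef
    have hA : (3 + 2*s)^2 = 6*(3+2*s) - 1 := by nlinarith [hs]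
    have hB : (3 - 2*s)^2 = 6*(3-2*s) - 1 := by nlinarith [hs]
    have hE : ∀ n : ℕ,
        ((d n : ℝ)) = ((5*s+1)/2)*(3+2*s)^n - ((5*s-1)/2)*(3-2*s)^n ∧
        ((d (n+1) : ℝ)) = ((5*s+1)/2)*(3+2*s)^(n+1) - ((5*s-1)/2)*(3-2*s)^(n+1) := by
      intro n
      induction n with
      | zero =>
        constructor
        · rw [d0]; push_cast; ring
        · rw [d1]; push_cast; linear_combination (-10 : ℝ) * hs
      | succ k ih =>
        refine ⟨ih.2, ?_⟩
        have hα : (3+2*s)^(k+2) = 6*(3+2*s)^(k+1) - (3+2*s)^k := by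
          calc (3+2*s)^(k+2) = (3+2*s)^k * (3+2*s)^2 := by ring
            _ = (3+2*s)^k * (6*(3+2*s) - 1) := by rw [hA]
            _ = 6*(3+2*s)^(k+1) - (3+2*s)^k := by ring
        have hβ : (3-2*s)^(k+2) = 6*(3-2*s)^(k+1) - (3-2*s)^k := by
          calc (3-2*s)^(k+2) = (3-2*s)^k * (3-2*s)^2 := by ring
            _ = (3-2*s)^k * (6*(3-2*s) - 1) := by rw [hB]
            _ = 6*(3-2*s)^(k+1) - (3-2*s)^k := by ring
        have hd := drec k
        rw [hd]
        push_cast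
        rw [ih.1, ih.2]
        linear_combination (-(5*s+1)/2) * hα + ((5*s-1)/2) * hβ
    intro n
    have h := (key n).1
    have e := (hE n).1
    have h' : (2 * (b n : ℝ)^2 - 49) = ((d n : ℝ))^2 := by
      have := congrArg (fun z : ℤ => (z : ℝ)) h
      push_cast at this
      linarith
    rw [h', e]
  · intro n hn
    obtain ⟨m, rfl⟩ := Nat.exists_eq_succ_of_ne_zero (by omega : n ≠ 0)
    refine ⟨d (m+1), (dpos (m+1)).1, (dpos (m+1)).2.2.1, by have := dge m; omega, ?_⟩
    have := (key (m+1)).1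
    linarith
end

section
/- Every pair (p, q) of positive integers satisfying p² − 2q² = 7 or p² − 2q² = −7 satisfies p + q√2 = (1 + √2)^k·(1 + 2√2) or p + q√2 = (1 + √2)^k·(3 + √2) for some non-negative integer k. -/
open Real

lemma aux12 : ∀ n : ℕ, ∀ p q : ℤ, 0 < p → 0 < q → q.toNat ≤ n →
    (p ^ 2 - 2 * q ^ 2 = 7 ∨ p ^ 2 - 2 * q ^ 2 = -7) →
    ∃ k : ℕ,
      (p : ℝ) + (q : ℝ) * Real.sqrt 2 = (1 + Real.sqrt 2) ^ k * (1 + 2 * Real.sqrt 2) ∨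
      (p : ℝ) + (q : ℝ) * Real.sqrt 2 = (1 + Real.sqrt 2) ^ k * (3 + Real.sqrt 2) := by
  intro n
  induction n with
  | zero =>
    intro p q hp hq hn h
    omega
  | succ n ih =>
    intro p q hp hq hn h
    have h2 : Real.sqrt 2 * Real.sqrt 2 = 2 := Real.mul_self_sqrt (by norm_num)
    by_cases hbig : 2 * q ≤ p
    · -- p ≥ 2q : forces p = 3, q = 1
      have h7 : p ^ 2 - 2 * q ^ 2 = 7 := by
        rcases h with h | h
        · exact h
        · nlinarith
      have hq1 : q = 1 := by nlinarith
      have hp3 : p = 3 := by nlinarith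
      subst hq1; subst hp3
      exact ⟨0, Or.inr (by push_cast; ring)⟩
    · by_cases hsmall : p ≤ q
      · -- p ≤ q : forces p = 1, q = 2
        have h7 : p ^ 2 - 2 * q ^ 2 = -7 := by
          rcases h with h | h
          · nlinarith
          · exact h
        have hq2 : q = 2 := by nlinarith
        have hp1 : p = 1 := by nlinarith
        subst hq2; subst hp1
        exact ⟨0, Or.inl (by push_cast; ring)⟩
      · -- descent
        push_neg at hbig hsmall
        set p' := 2 * q - p with hp'
        set q' := p - q with hq'
        have hp'pos : 0 < p' := by omega
        have hq'pos : 0 < q' := by omega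
        have hlt : q'.toNat ≤ n := by omega
        have h' : p' ^ 2 - 2 * q' ^ 2 = 7 ∨ p' ^ 2 - 2 * q' ^ 2 = -7 := by
          rcases h with h | h
          · right; nlinarith [h]
          · left; nlinarith [h]
        obtain ⟨k, hk⟩ := ih p' q' hp'pos hq'pos hlt h'
        refine ⟨k + 1, ?_⟩
        have key : (p : ℝ) + (q : ℝ) * Real.sqrt 2
            = (1 + Real.sqrt 2) * ((p' : ℝ) + (q' : ℝ) * Real.sqrt 2) := by
          push_cast [hp', hq']
          linear_combination ((q:ℝ) - p) * h2
        rcases hk with hk | hk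
        · left; rw [key, hk, pow_succ]; ring
        · right; rw [key, hk, pow_succ]; ring

/-- Every pair of positive integers `(p, q)` with `p^2 - 2 q^2 = ±7` satisfies
`p + q√2 = (1 + √2)^k (1 + 2√2)` or `p + q√2 = (1 + √2)^k (3 + √2)` for some `k ≥ 0`. -/
theorem stmt_12 (p q : ℤ) (hp : 0 < p) (hq : 0 < q)
    (h : p ^ 2 - 2 * q ^ 2 = 7 ∨ p ^ 2 - 2 * q ^ 2 = -7) :
    ∃ k : ℕ,
      (p : ℝ) + (q : ℝ) * Real.sqrt 2 = (1 + Real.sqrt 2) ^ k * (1 + 2 * Real.sqrt 2) ∨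
      (p : ℝ) + (q : ℝ) * Real.sqrt 2 = (1 + Real.sqrt 2) ^ k * (3 + Real.sqrt 2) := by
  exact aux12 q.toNat p q hp hq le_rfl h
end

section
/- Let a : ℤ → ℤ be the two-sided sequence with a_0 = 5, a_1 = 13 and a_{n+1} = 6a_n − a_{n−1} for all integers n. Then a positive integer z is the hypotenuse of a primitive Pythagorean triple whose legs differ by 7 if and only if z = a_n for some nonzero integer n. -/
private def PFwd (a : ℤ → ℤ) (n : ℤ) : Prop :=
  ∃ x : ℤ, 17 ≤ x ∧ x % 2 = 1 ∧ x ^ 2 + 49 = 2 * (a n) ^ 2 ∧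
    a (n + 1) = 2 * x + 3 * a n ∧ 13 ≤ a n ∧
    ((x % 7 = 3 ∧ a n % 7 = 6) ∨ (x % 7 = 5 ∧ a n % 7 = 3) ∨ (x % 7 = 6 ∧ a n % 7 = 5))

private def PBwd (a : ℤ → ℤ) (n : ℤ) : Prop :=
  ∃ x : ℤ, 17 ≤ x ∧ x % 2 = 1 ∧ x ^ 2 + 49 = 2 * (a n) ^ 2 ∧
    a (n - 1) = 2 * x + 3 * a n ∧ 13 ≤ a n ∧
    ((x % 7 = 2 ∧ a n % 7 = 3) ∨ (x % 7 = 4 ∧ a n % 7 = 6) ∨ (x % 7 = 1 ∧ a n % 7 = 5))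

private lemma pfwd_step (a : ℤ → ℤ) (hrec : ∀ n : ℤ, a (n + 1) = 6 * a n - a (n - 1))
    (n : ℤ) (h : PFwd a n) : PFwd a (n + 1) := by
  obtain ⟨x, hx17, hxodd, heq, hnext, hz13, h7⟩ := h
  have hstep : a (n + 1 + 1) = 6 * a (n + 1) - a n := by
    have := hrec (n + 1)
    simpa using this
  refine ⟨3 * x + 4 * a n, by omega, by omega, ?_, ?_, by omega, ?_⟩
  · rw [hnext]; linear_combination heq
  · rw [hstep, hnext]; ring
  · rw [hnext]; omega

private lemma pbwd_step (a : ℤ → ℤ) (hrec : ∀ n : ℤ, a (n + 1) = 6 * a n - a (n - 1))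
    (n : ℤ) (h : PBwd a n) : PBwd a (n - 1) := by
  obtain ⟨x, hx17, hxodd, heq, hnext, hz13, h7⟩ := h
  have hstep : a (n - 1 - 1) = 6 * a (n - 1) - a n := by
    have := hrec (n - 1)
    have h' : n - 1 + 1 = n := by ring
    rw [h'] at this
    omega
  refine ⟨3 * x + 4 * a n, by omega, by omega, ?_, ?_, by omega, ?_⟩
  · rw [hnext]; linear_combination heq
  · rw [hstep, hnext]; ring
  · rw [hnext]; omega

private lemma pfwd_all (a : ℤ → ℤ) (h0 : a 0 = 5) (h1 : a 1 = 13)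
    (hrec : ∀ n : ℤ, a (n + 1) = 6 * a n - a (n - 1)) :
    ∀ n : ℤ, 1 ≤ n → PFwd a n := by
  have hbase : PFwd a 1 := by
    have h2 : a 2 = 73 := by
      have := hrec 1
      norm_num at this
      omega
    refine ⟨17, by norm_num, by norm_num, by rw [h1]; norm_num, ?_, by rw [h1], ?_⟩
    · show a (1 + 1) = 2 * 17 + 3 * a 1
      norm_num [h1, h2]
    · rw [h1]; norm_num
  exact Int.le_induction hbase (fun n _ h => pfwd_step a hrec n h)

private lemma pbwd_all (a : ℤ → ℤ) (h0 : a 0 = 5) (h1 : a 1 = 13)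
    (hrec : ∀ n : ℤ, a (n + 1) = 6 * a n - a (n - 1)) :
    ∀ n : ℤ, n ≤ -1 → PBwd a n := by
  have hm1 : a (-1) = 17 := by
    have := hrec 0
    norm_num at this
    omega
  have hbase : PBwd a (-1) := by
    have hm2 : a (-2) = 97 := by
      have := hrec (-1)
      norm_num at this
      omega
    refine ⟨23, by norm_num, by norm_num, by rw [hm1]; norm_num, ?_, ?_, ?_⟩
    · show a (-1 - 1) = 2 * 23 + 3 * a (-1)
      rw [hm1]
      norm_num
      exact hm2
    · rw [hm1]; norm_num
    · rw [hm1]; norm_num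
  exact Int.le_induction_down hbase (fun n _ h => pbwd_step a hrec n h)

private lemma descent_aux (a : ℤ → ℤ) (h0 : a 0 = 5) (h1 : a 1 = 13)
    (hrec : ∀ n : ℤ, a (n + 1) = 6 * a n - a (n - 1)) :
    ∀ N : ℕ, ∀ z x : ℤ, z.toNat ≤ N → 0 < z → x ^ 2 + 49 = 2 * z ^ 2 → z % 7 ≠ 0 →
      ∃ n : ℤ, z = a n ∧ (a (n + 1) = 3 * z + 2 * x ∨ a (n + 1) = 3 * z - 2 * x) := by
  intro N
  induction N with
  | zero => intro z x hzN hz _ _; omega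
  | succ N ih =>
    intro z x hzN hz heq h7
    have key : ∀ y : ℤ, 0 ≤ y → y ^ 2 + 49 = 2 * z ^ 2 →
        ∃ n : ℤ, z = a n ∧ (a (n + 1) = 3 * z + 2 * y ∨ a (n + 1) = 3 * z - 2 * y) := by
      intro y hy hyeq
      have hz5 : 5 ≤ z := by nlinarith [sq_nonneg y]
      rcases eq_or_lt_of_le hz5 with hz5' | hz6
      · -- z = 5
        have hy1 : y = 1 := by nlinarith [sq_nonneg (y - 1), sq_nonneg (y + 1)]
        subst hy1
        refine ⟨0, by rw [h0, ← hz5'], Or.inr ?_⟩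
        show a (0 + 1) = 3 * z - 2 * 1
        rw [show (0 : ℤ) + 1 = 1 by norm_num, h1, ← hz5']
        norm_num
      · rcases eq_or_lt_of_le (by omega : (6 : ℤ) ≤ z) with hz6' | hz7
        · -- z = 6 : impossible, y^2 = 23
          exfalso
          have hy23 : y ^ 2 = 23 := by rw [← hz6'] at hyeq; linarith
          have hyle : y ≤ 4 := by nlinarith
          interval_cases y <;> omega
        · -- z = 7 excluded, so z ≥ 8
          have hz8 : 8 ≤ z := by omega
          -- y > z
          have hyz : z < y := by nlinarith
          set y' : ℤ := 3 * y - 4 * z with hy'def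
          set z' : ℤ := 3 * z - 2 * y with hz'def
          have hz'pos : 0 < z' := by nlinarith
          have hz'lt : z' < z := by omega
          have heq' : y' ^ 2 + 49 = 2 * z' ^ 2 := by
            rw [hy'def, hz'def]; linear_combination hyeq
          have h7' : z' % 7 ≠ 0 := by
            intro hdvd
            have hd : (7 : ℤ) ∣ z' := by omega
            have hd2 : (7 : ℤ) ∣ (3 * z - 2 * y) * (3 * z + 2 * y) := by
              rw [← hz'def] at *
              exact hd.mul_right _
            have hd3 : (7 : ℤ) ∣ z ^ 2 := by
              have hval : (3 * z - 2 * y) * (3 * z + 2 * y) = z ^ 2 + 196 := by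
                linear_combination -4 * hyeq
              rw [hval] at hd2
              have h196 : (7 : ℤ) ∣ 196 := ⟨28, by norm_num⟩
              simpa using dvd_sub hd2 h196
            have hp : Prime (7 : ℤ) := by norm_num
            have : (7 : ℤ) ∣ z := hp.dvd_of_dvd_pow hd3
            omega
          obtain ⟨n', hn', hc⟩ := ih z' y' (by omega) hz'pos heq' h7'
          rcases hc with hc | hc
          · -- a (n'+1) = 3z' + 2y' = z
            have hcz : a (n' + 1) = z := by rw [hc, hz'def, hy'def]; ring
            refine ⟨n' + 1, hcz.symm, Or.inl ?_⟩
            have hstep : a (n' + 1 + 1) = 6 * a (n' + 1) - a n' := by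
              have := hrec (n' + 1); simpa using this
            rw [hstep, hcz, ← hn', hz'def]; ring
          · -- a (n'+1) = 3z' - 2y' = 17z - 12y ; then a (n'-1) = z
            have hstep : a (n' + 1) = 6 * a n' - a (n' - 1) := hrec n'
            have hcz : a (n' - 1) = z := by
              have : a (n' - 1) = 6 * a n' - a (n' + 1) := by omega
              rw [this, ← hn', hc, hz'def, hy'def]; ring
            refine ⟨n' - 1, hcz.symm, Or.inr ?_⟩
            have h' : n' - 1 + 1 = n' := by ring
            rw [h', ← hn', hz'def]
    rcases le_or_gt 0 x with hx | hx
    · exact key x hx heq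
    · obtain ⟨n, hn, hc⟩ := key (-x) (by omega) (by linear_combination heq)
      refine ⟨n, hn, ?_⟩
      rcases hc with h | h
      · right; rw [h]; ring
      · left; rw [h]; ring

/-- For the two-sided sequence `a : ℤ → ℤ` with `a 0 = 5`, `a 1 = 13` and
`a (n+1) = 6 a n - a (n-1)` on ℤ: a positive integer `z` is the hypotenuse of a primitive
Pythagorean triple with legs differing by 7 iff `z = a n` for some nonzero integer `n`. -/
theorem stmt_18 (a : ℤ → ℤ)
    (h0 : a 0 = 5) (h1 : a 1 = 13)
    (hrec : ∀ n : ℤ, a (n + 1) = 6 * a n - a (n - 1))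
    (z : ℤ) (hz : 0 < z) :
    (∃ m : ℤ, 0 < m ∧ m ^ 2 + (m + 7) ^ 2 = z ^ 2 ∧
        Int.gcd (Int.gcd m (m + 7)) z = 1) ↔
      ∃ n : ℤ, n ≠ 0 ∧ z = a n := by
  constructor
  · rintro ⟨m, hm, heqm, hgcd⟩
    have heq : (2 * m + 7) ^ 2 + 49 = 2 * z ^ 2 := by linear_combination 2 * heqm
    have h7 : z % 7 ≠ 0 := by
      intro h7z
      have hd : (7 : ℤ) ∣ z := by omega
      have hdz2 : (7 : ℤ) ∣ z ^ 2 := Dvd.dvd.pow hd (by norm_num)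
      have hdm2 : (7 : ℤ) ∣ 2 * m ^ 2 := by
        have h' : 2 * m ^ 2 = z ^ 2 - 14 * m - 49 := by linear_combination heqm
        rw [h']
        exact dvd_sub (dvd_sub hdz2 ⟨2 * m, by ring⟩) ⟨7, by ring⟩
      have hp : Prime (7 : ℤ) := by norm_num
      have hdm : (7 : ℤ) ∣ m := by
        rcases hp.dvd_mul.mp hdm2 with h | h
        · norm_num at h
        · exact hp.dvd_of_dvd_pow h
      have hg1 : (7 : ℤ) ∣ (Int.gcd m (m + 7) : ℤ) :=
        Int.dvd_coe_gcd hdm (by exact dvd_add hdm ⟨1, by ring⟩)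
      have hg2 : (7 : ℤ) ∣ (Int.gcd (Int.gcd m (m + 7)) z : ℤ) := Int.dvd_coe_gcd hg1 hd
      rw [hgcd] at hg2
      norm_num at hg2
    obtain ⟨n, hn, _⟩ := descent_aux a h0 h1 hrec z.toNat z (2 * m + 7) (le_refl _) hz heq h7
    refine ⟨n, ?_, hn⟩
    intro hn0
    subst hn0
    rw [h0] at hn
    nlinarith
  · rintro ⟨n, hn0, hzn⟩
    have hP : ∃ x : ℤ, 17 ≤ x ∧ x % 2 = 1 ∧ x ^ 2 + 49 = 2 * (a n) ^ 2 ∧ a n % 7 ≠ 0 := by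
      rcases lt_or_gt_of_ne hn0 with hneg | hpos
      · obtain ⟨x, hx17, hxodd, heq, _, _, h7⟩ := pbwd_all a h0 h1 hrec n (by omega)
        exact ⟨x, hx17, hxodd, heq, by omega⟩
      · obtain ⟨x, hx17, hxodd, heq, _, _, h7⟩ := pfwd_all a h0 h1 hrec n (by omega)
        exact ⟨x, hx17, hxodd, heq, by omega⟩
    obtain ⟨x, hx17, hxodd, heq, h7⟩ := hP
    rw [← hzn] at heq h7
    obtain ⟨m, hmx, hmpos⟩ : ∃ m : ℤ, x = 2 * m + 7 ∧ 0 < m := ⟨(x - 7) / 2, by omega, by omega⟩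
    subst hmx
    refine ⟨m, hmpos, ?_, ?_⟩
    · have h2 : 2 * (m ^ 2 + (m + 7) ^ 2) = 2 * z ^ 2 := by linear_combination heq
      linarith
    · set g : ℕ := Int.gcd m (m + 7) with hg
      set d : ℕ := Int.gcd (g : ℤ) z with hd
      have hg7 : (g : ℤ) ∣ 7 := by
        have := Int.gcd_dvd_left (a := m) (b := m + 7)
        have h2 := Int.gcd_dvd_right (a := m) (b := m + 7)
        have : (g : ℤ) ∣ (m + 7) - m := dvd_sub h2 this
        simpa using this
      have hd7 : (d : ℤ) ∣ 7 := dvd_trans (Int.gcd_dvd_left _ _) hg7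
      have hdz : (d : ℤ) ∣ z := Int.gcd_dvd_right _ _
      have hd7' : d ∣ 7 := by exact_mod_cast hd7
      obtain ⟨c, hc⟩ := hd7'
      have hd' : d = 1 ∨ d = 7 := by
        have hdle : d ≤ 7 := Nat.le_of_dvd (by norm_num) ⟨c, hc⟩
        interval_cases d <;> omega
      rcases hd' with h | h
      · exact h
      · exfalso
        rw [h] at hdz
        norm_num at hdz
        omega
end
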